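/- arXiv:2006.00134 — 6 statements merged into one kernel-verified Lean document; each statement's English description precedes it below -/
import Mathlib

section
/- Let B : [0,∞) → ℝ be measurable such that the function x ↦ B(|x|) on ℝ² is locally square integrable (equivalently, s ↦ B(s)² s is integrable on (0, R) for every R > 0). Then the function x ↦ Φ(|x|)/|x| on ℝ² \ {0} is locally square integrable, i.e. for every R > 0 one has ∫_{|x| ≤ R} (Φ(|x|)/|x|)² dx < ∞. In particular, the Poincaré-gauge magnetic vector potential A(x) = (Φ(|x|)/|x|²) · (−x₂, x₁) belongs to L²_loc(ℝ², ℝ²). -/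
/-!
Integrating the weighted AM–GM inequality `|B s| s ≤ (r B(s)² s + s / r) / 2` over `(0, r)` gives
`|Φ r| ≤ r (∫₀^R B² s ds + 1/2) / 2` for `0 < r ≤ R`, so `Φ(|x|)/|x|` is bounded on the ball of
radius `R`; it is measurable there because `Φ` is continuous on `[0, R]`. Since `(-x₂, x₁)` has
length `|x|`, the second claim reduces to the first.
-/

open MeasureTheory Set Metric

lemma abs_mul_le_half_mul_sq_add_div {r : ℝ} (hr : 0 < r) (b : ℝ) {s : ℝ} (hs : 0 ≤ s) :
    |b| * s ≤ (r * (b ^ 2 * s) + s / r) / 2 := by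
  have h_gap : r * (b ^ 2 * s) + s / r - 2 * (|b| * s) = s / r * (r * |b| - 1) ^ 2 := by
    field_simp
    rw [← sq_abs b]
    ring
  nlinarith [show 0 ≤ s / r * (r * |b| - 1) ^ 2 by positivity]

lemma integrableOn_Ioo_id (a b : ℝ) : IntegrableOn (fun s : ℝ => s) (Ioo a b) :=
  continuous_id.integrableOn_Icc.mono_set Ioo_subset_Icc_self

lemma integrableOn_mul_id_of_integrableOn_sq_mul {B : ℝ → ℝ} {R : ℝ}
    (hB : AEStronglyMeasurable B (volume.restrict (Ioo 0 R)))
    (hint : IntegrableOn (fun s => B s ^ 2 * s) (Ioo 0 R)) :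
    IntegrableOn (fun s => B s * s) (Ioo 0 R) := by
  refine Integrable.mono' ((hint.add (integrableOn_Ioo_id 0 R)).div_const 2)
    (hB.mul aestronglyMeasurable_id) ?_
  filter_upwards [ae_restrict_mem measurableSet_Ioo] with s hs
  rw [Real.norm_eq_abs, abs_mul, abs_of_pos hs.1]
  simpa using abs_mul_le_half_mul_sq_add_div one_pos (B s) hs.1.le

lemma abs_setIntegral_Ioo_mul_id_le {B : ℝ → ℝ} {r R : ℝ} (hr : 0 < r) (hrR : r ≤ R)
    (hint : IntegrableOn (fun s => B s ^ 2 * s) (Ioo 0 R)) :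
    |∫ s in Ioo 0 r, B s * s| ≤ ((∫ s in Ioo 0 R, B s ^ 2 * s) + 1 / 2) / 2 * r := by
  have hint_r : IntegrableOn (fun s => B s ^ 2 * s) (Ioo 0 r) :=
    hint.mono_set (Ioo_subset_Ioo_right hrR)
  have h_mono : ∫ s in Ioo 0 r, B s ^ 2 * s ≤ ∫ s in Ioo 0 R, B s ^ 2 * s :=
    setIntegral_mono_set hint
      (ae_restrict_of_forall_mem measurableSet_Ioo fun s hs => by have := hs.1; positivity)
      (Ioo_subset_Ioo_right hrR).eventuallyLE
  have h_id : ∫ s in Ioo 0 r, s = r ^ 2 / 2 := by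
    rw [← integral_Ioc_eq_integral_Ioo, ← intervalIntegral.integral_of_le hr.le, integral_id]
    ring
  calc |∫ s in Ioo 0 r, B s * s| ≤ ∫ s in Ioo 0 r, |B s * s| := abs_integral_le_integral_abs
    _ ≤ ∫ s in Ioo 0 r, (r * (B s ^ 2 * s) + s / r) / 2 := by
      refine integral_mono_of_nonneg (.of_forall fun s => abs_nonneg _)
        (((hint_r.const_mul r).add ((integrableOn_Ioo_id 0 r).div_const r)).div_const 2) ?_
      filter_upwards [ae_restrict_mem measurableSet_Ioo] with s hs
      rw [abs_mul, abs_of_pos hs.1]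
      exact abs_mul_le_half_mul_sq_add_div hr (B s) hs.1.le
    _ = (r * ∫ s in Ioo 0 r, B s ^ 2 * s) / 2 + r / 4 := by
      rw [integral_div, integral_add (hint_r.const_mul r) ((integrableOn_Ioo_id 0 r).div_const r),
        integral_const_mul, integral_div, h_id]
      field_simp
      ring
    _ ≤ ((∫ s in Ioo 0 R, B s ^ 2 * s) + 1 / 2) / 2 * r := by nlinarith

lemma continuousOn_setIntegral_Ioo {E : Type*} [NormedAddCommGroup E] [NormedSpace ℝ E]
    {f : ℝ → E} {R : ℝ} (hR : 0 ≤ R) (hf : IntegrableOn f (Ioo 0 R)) :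
    ContinuousOn (fun r => ∫ s in Ioo 0 r, f s) (Icc 0 R) := by
  have hf' : IntegrableOn f (uIcc 0 R) := by
    rw [uIcc_of_le hR]
    exact (integrableOn_Icc_iff_integrableOn_Ioo).2 hf
  have h := intervalIntegral.continuousOn_primitive_interval hf'
  rw [uIcc_of_le hR] at h
  refine h.congr fun r hr => ?_
  dsimp only
  rw [intervalIntegral.integral_of_le hr.1, integral_Ioc_eq_integral_Ioo]

lemma integrableOn_closedBall_sq_div_norm {E : Type*} [NormedAddCommGroup E] [ProperSpace E]
    [MeasurableSpace E] [BorelSpace E] (μ : Measure E) [IsFiniteMeasureOnCompacts μ]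
    {Φ : ℝ → ℝ} {R C : ℝ} (hΦ : ContinuousOn Φ (Icc 0 R))
    (hΦC : ∀ r ∈ Ioc 0 R, |Φ r| ≤ C * r) :
    IntegrableOn (fun x : E => (Φ ‖x‖ / ‖x‖) ^ 2) (closedBall 0 R) μ := by
  have hΦ_norm : AEStronglyMeasurable (fun x : E => Φ ‖x‖) (μ.restrict (closedBall 0 R)) :=
    (hΦ.comp continuous_norm.continuousOn fun x hx =>
      ⟨norm_nonneg x, mem_closedBall_zero_iff.mp hx⟩).aestronglyMeasurable measurableSet_closedBall
  refine IntegrableOn.of_bound measure_closedBall_lt_top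
    ((hΦ_norm.aemeasurable.div measurable_norm.aemeasurable).pow_const 2).aestronglyMeasurable
    (C ^ 2) ?_
  filter_upwards [ae_restrict_mem measurableSet_closedBall] with x hx
  rcases (norm_nonneg x).eq_or_lt with h0 | h0
  · simp [← h0, sq_nonneg]
  · have h : |Φ ‖x‖| / ‖x‖ ≤ C :=
      (div_le_iff₀ h0).mpr (hΦC _ ⟨h0, mem_closedBall_zero_iff.mp hx⟩)
    rw [norm_pow, Real.norm_eq_abs, abs_div, abs_norm]
    exact pow_le_pow_left₀ (by positivity) h 2

lemma norm_rotation_pi_div_two (x : EuclideanSpace ℝ (Fin 2)) :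
    ‖(WithLp.equiv 2 (Fin 2 → ℝ)).symm ![-(x 1), x 0]‖ = ‖x‖ := by
  simp [EuclideanSpace.norm_eq, Fin.sum_univ_two, add_comm]

lemma norm_div_norm_sq_smul_rotation (c : ℝ) (x : EuclideanSpace ℝ (Fin 2)) :
    ‖(c / ‖x‖ ^ 2) • (WithLp.equiv 2 (Fin 2 → ℝ)).symm ![-(x 1), x 0]‖ = |c / ‖x‖| := by
  rw [norm_smul, norm_rotation_pi_div_two, Real.norm_eq_abs, abs_div, abs_div, abs_pow, abs_norm]
  rcases eq_or_ne ‖x‖ 0 with h0 | h0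
  · simp [h0]
  · field_simp

/-- If the radial magnetic field `B` is measurable and `x ↦ B(|x|)` is locally square
integrable on `ℝ²` (equivalently, `s ↦ B(s)² s` is integrable on `(0,R)` for every `R > 0`),
then `x ↦ Φ(|x|)/|x|` is locally square integrable, where `Φ(r) = ∫₀^r B(s) s ds` is the
magnetic flux.  In particular, the Poincaré-gauge vector potential
`A(x) = (Φ(|x|)/|x|²) (−x₂, x₁)` is in `L²_loc(ℝ², ℝ²)`. -/
theorem poincare_gauge_locally_square_integrable (B : ℝ → ℝ) (hB : Measurable B)
    (hint : ∀ R > (0 : ℝ), IntegrableOn (fun s => B s ^ 2 * s) (Set.Ioo 0 R)) :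
    (∀ R > (0 : ℝ), IntegrableOn
        (fun x : EuclideanSpace ℝ (Fin 2) =>
          ((∫ s in Set.Ioo (0 : ℝ) ‖x‖, B s * s) / ‖x‖) ^ 2)
        {x | ‖x‖ ≤ R}) ∧
    (∀ R > (0 : ℝ), IntegrableOn
        (fun x : EuclideanSpace ℝ (Fin 2) =>
          ‖((∫ s in Set.Ioo (0 : ℝ) ‖x‖, B s * s) / ‖x‖ ^ 2) •
              ((WithLp.equiv 2 (Fin 2 → ℝ)).symm ![-(x 1), x 0])‖ ^ 2)
        {x | ‖x‖ ≤ R}) := by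
  have flux_div_norm : ∀ R > (0 : ℝ), IntegrableOn
      (fun x : EuclideanSpace ℝ (Fin 2) => ((∫ s in Ioo 0 ‖x‖, B s * s) / ‖x‖) ^ 2)
      {x | ‖x‖ ≤ R} := fun R hR => by
    rw [show {x : EuclideanSpace ℝ (Fin 2) | ‖x‖ ≤ R} = closedBall 0 R by ext; simp]
    exact integrableOn_closedBall_sq_div_norm volume
      (continuousOn_setIntegral_Ioo hR.le
        (integrableOn_mul_id_of_integrableOn_sq_mul hB.aestronglyMeasurable (hint R hR)))
      fun r hr => abs_setIntegral_Ioo_mul_id_le hr.1 hr.2 (hint R hR)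
  refine ⟨flux_div_norm, fun R hR => ?_⟩
  simpa only [norm_div_norm_sq_smul_rotation, sq_abs] using flux_div_norm R hR
end

section
/- Let B : [0,∞) → ℝ be measurable with s ↦ B(s)² s integrable on (0, R) for every R > 0, and let Φ(r) = ∫₀^r B(s) s ds. Then for every R > 0, ∫_{|x| ≤ R} (Φ(|x|)/|x|)² dx ≤ (π/2) · ∫₀^R B(s)² (R² − s²) s ds. -/
/-!
Cauchy–Schwarz against the weight `s` on `(0, r)` gives `(Φ(r)/r)² ≤ ½ ∫₀^r B(s)² s ds`.
In polar coordinates the left-hand side is `2π ∫₀^R (Φ(y)/y)² y dy`, and exchanging the order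
of integration turns `∫₀^R y ∫₀^y B(s)² s ds dy` into `∫₀^R B(s)² s (R² − s²)/2 ds`.
-/

open MeasureTheory Set Metric Module

theorem sq_integral_mul_le_integral_sq_mul_integral_sq {α : Type*} [MeasurableSpace α]
    {μ : Measure α} {f g : α → ℝ} (hf : MemLp f 2 μ) (hg : MemLp g 2 μ) :
    (∫ a, f a * g a ∂μ) ^ 2 ≤ (∫ a, f a ^ 2 ∂μ) * ∫ a, g a ^ 2 ∂μ := by
  have inner_toLp : ∀ {u v : α → ℝ} (hu : MemLp u 2 μ) (hv : MemLp v 2 μ),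
      inner ℝ (hu.toLp u) (hv.toLp v) = ∫ a, u a * v a ∂μ := fun hu hv => by
    rw [L2.inner_def]
    refine integral_congr_ae ?_
    filter_upwards [hu.coeFn_toLp, hv.coeFn_toLp] with a hua hva
    rw [hua, hva, RCLike.inner_apply, conj_trivial, mul_comm]
  simpa only [inner_toLp, ← sq] using real_inner_mul_inner_self_le (hf.toLp f) (hg.toLp g)

theorem integral_Ioo_id {a b : ℝ} (hab : a ≤ b) : ∫ s in Ioo a b, s = (b ^ 2 - a ^ 2) / 2 := by
  rw [← integral_Ioc_eq_integral_Ioo, ← intervalIntegral.integral_of_le hab, integral_id]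

theorem sq_setIntegral_Ioo_mul_id_div_le {B : ℝ → ℝ} {r : ℝ} (hr : 0 < r)
    (hB : IntegrableOn (fun s => B s ^ 2 * s) (Ioo 0 r)) :
    ((∫ s in Ioo 0 r, B s * s) / r) ^ 2 ≤ 1 / 2 * ∫ s in Ioo 0 r, B s ^ 2 * s := by
  have hpos : ∀ᵐ s ∂volume.restrict (Ioo 0 r), 0 ≤ s :=
    ae_restrict_of_forall_mem measurableSet_Ioo fun s hs => hs.1.le
  have hsqrt : MemLp (fun s => √s) 2 (volume.restrict (Ioo 0 r)) :=
    (memLp_two_iff_integrable_sq (by fun_prop)).2 <|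
      (continuous_id.integrableOn_Ioc.mono_set Ioo_subset_Ioc_self).congr
        (hpos.mono fun s hs => (Real.sq_sqrt hs).symm)
  have hBsqrt : MemLp (fun s => √(B s ^ 2 * s)) 2 (volume.restrict (Ioo 0 r)) :=
    (memLp_two_iff_integrable_sq
      (Real.continuous_sqrt.comp_aestronglyMeasurable hB.aestronglyMeasurable)).2 <|
      hB.congr (hpos.mono fun s hs => (Real.sq_sqrt (by positivity)).symm)
  have flux_le : |∫ s in Ioo 0 r, B s * s| ≤ ∫ s in Ioo 0 r, √(B s ^ 2 * s) * √s := by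
    refine abs_integral_le_integral_abs.trans_eq (integral_congr_ae (hpos.mono fun s hs => ?_))
    dsimp only
    rw [← Real.sqrt_mul (by positivity), show B s ^ 2 * s * s = (B s * s) ^ 2 by ring,
      Real.sqrt_sq_eq_abs]
  have energy_eq : ∫ s in Ioo 0 r, √(B s ^ 2 * s) ^ 2 = ∫ s in Ioo 0 r, B s ^ 2 * s :=
    integral_congr_ae (hpos.mono fun s hs => Real.sq_sqrt (by positivity))
  have area_eq : ∫ s in Ioo 0 r, √s ^ 2 = r ^ 2 / 2 := by
    rw [integral_congr_ae (hpos.mono fun s hs => Real.sq_sqrt hs), integral_Ioo_id hr.le]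
    ring
  have cauchy_schwarz := sq_integral_mul_le_integral_sq_mul_integral_sq hBsqrt hsqrt
  rw [energy_eq, area_eq] at cauchy_schwarz
  rw [div_pow, div_le_iff₀ (by positivity)]
  nlinarith [sq_le_sq.2 (flux_le.trans (le_abs_self _))]

theorem setIntegral_Ioo_mul_setIntegral_Ioo_swap {a b : ℝ} {g h : ℝ → ℝ}
    (hg : IntegrableOn g (Ioo a b)) (hh : IntegrableOn h (Ioo a b)) :
    ∫ y in Ioo a b, h y * ∫ s in Ioo a y, g s = ∫ s in Ioo a b, g s * ∫ y in Ioo s b, h y := by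
  set K : ℝ → ℝ → ℝ := fun y s =>
    {p : ℝ × ℝ | p.2 < p.1}.indicator (fun p => h p.1 * g p.2) (y, s)
  have hK : Integrable (Function.uncurry K)
      ((volume.restrict (Ioo a b)).prod (volume.restrict (Ioo a b))) :=
    (hh.mul_prod hg).indicator (measurableSet_lt measurable_snd measurable_fst)
  have integral_K_right : ∀ y ∈ Ioo a b, ∫ s in Ioo a b, K y s = h y * ∫ s in Ioo a y, g s := by
    intro y hy
    change ∫ s in Ioo a b, (Iio y).indicator (fun s => h y * g s) s = _
    rw [setIntegral_indicator measurableSet_Iio, Ioo_inter_Iio, min_eq_right hy.2.le,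
      integral_const_mul]
  have integral_K_left : ∀ s ∈ Ioo a b, ∫ y in Ioo a b, K y s = g s * ∫ y in Ioo s b, h y := by
    intro s hs
    change ∫ y in Ioo a b, (Ioi s).indicator (fun y => h y * g s) y = _
    rw [setIntegral_indicator measurableSet_Ioi, Ioo_inter_Ioi, max_eq_right hs.1.le,
      integral_mul_const, mul_comm]
  calc ∫ y in Ioo a b, h y * ∫ s in Ioo a y, g s
      = ∫ y in Ioo a b, ∫ s in Ioo a b, K y s :=
        setIntegral_congr_fun measurableSet_Ioo fun y hy => (integral_K_right y hy).symm
    _ = ∫ s in Ioo a b, ∫ y in Ioo a b, K y s := integral_integral_swap hK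
    _ = ∫ s in Ioo a b, g s * ∫ y in Ioo s b, h y :=
        setIntegral_congr_fun measurableSet_Ioo integral_K_left

section Polar

variable {E F : Type*} [NormedAddCommGroup E] [NormedSpace ℝ E] [Nontrivial E]
  [FiniteDimensional ℝ E] [MeasurableSpace E] [BorelSpace E] (μ : Measure E) [μ.IsAddHaarMeasure]
  [NormedAddCommGroup F] [NormedSpace ℝ F]

theorem setIntegral_norm_le_fun_norm_addHaar (f : ℝ → F) (R : ℝ) :
    ∫ x in {x : E | ‖x‖ ≤ R}, f ‖x‖ ∂μ
      = finrank ℝ E • μ.real (ball 0 1) • ∫ y in Ioc 0 R, y ^ (finrank ℝ E - 1) • f y := by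
  rw [← integral_indicator (measurableSet_le measurable_norm measurable_const)]
  change ∫ x, ((‖·‖) ⁻¹' Iic R).indicator (f ∘ (‖·‖)) x ∂μ = _
  simp_rw [indicator_comp_right]
  rw [integral_fun_norm_addHaar μ, ← indicator_smul, setIntegral_indicator measurableSet_Iic,
    Ioi_inter_Iic]

end Polar

theorem EuclideanSpace.setIntegral_norm_le_fun_norm_fin_two (f : ℝ → ℝ) (R : ℝ) :
    ∫ x : EuclideanSpace ℝ (Fin 2) in {x | ‖x‖ ≤ R}, f ‖x‖
      = 2 * Real.pi * ∫ y in Ioo 0 R, y * f y := by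
  rw [setIntegral_norm_le_fun_norm_addHaar, finrank_euclideanSpace_fin, measureReal_def,
    EuclideanSpace.volume_ball_fin_two, integral_Ioc_eq_integral_Ioo]
  simp [Real.pi_nonneg, mul_assoc]

theorem integral_Ioo_mul_sq_flux_div_le {B : ℝ → ℝ} {R : ℝ}
    (hB : IntegrableOn (fun s => B s ^ 2 * s) (Ioo 0 R)) :
    ∫ y in Ioo 0 R, y * ((∫ s in Ioo 0 y, B s * s) / y) ^ 2
      ≤ 1 / 4 * ∫ s in Ioo 0 R, B s ^ 2 * (R ^ 2 - s ^ 2) * s := by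
  have energy_cont : ContinuousOn (fun y => ∫ s in Ioo 0 y, B s ^ 2 * s) (Icc 0 R) := by
    have hIcc := hB
    rw [← integrableOn_Icc_iff_integrableOn_Ioo] at hIcc
    simpa only [integral_Ioc_eq_integral_Ioo] using intervalIntegral.continuousOn_primitive hIcc
  have id_int : IntegrableOn (fun y : ℝ => y) (Ioo 0 R) :=
    continuous_id.integrableOn_Ioc.mono_set Ioo_subset_Ioc_self
  calc ∫ y in Ioo 0 R, y * ((∫ s in Ioo 0 y, B s * s) / y) ^ 2
      ≤ ∫ y in Ioo 0 R, y * (1 / 2 * ∫ s in Ioo 0 y, B s ^ 2 * s) := by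
        refine integral_mono_of_nonneg
          (ae_restrict_of_forall_mem measurableSet_Ioo fun y hy =>
            mul_nonneg hy.1.le (sq_nonneg _))
          ((continuousOn_id.mul (continuousOn_const.mul energy_cont)).integrableOn_Icc.mono_set
            Ioo_subset_Icc_self)
          (ae_restrict_of_forall_mem measurableSet_Ioo fun y hy => ?_)
        exact mul_le_mul_of_nonneg_left (sq_setIntegral_Ioo_mul_id_div_le hy.1
          (hB.mono_set (Ioo_subset_Ioo_right hy.2.le))) hy.1.le
    _ = 1 / 2 * ∫ s in Ioo 0 R, B s ^ 2 * s * ∫ y in Ioo s R, y := by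
        simp_rw [mul_left_comm _ (1 / 2 : ℝ)]
        rw [integral_const_mul, setIntegral_Ioo_mul_setIntegral_Ioo_swap hB id_int]
    _ = 1 / 4 * ∫ s in Ioo 0 R, B s ^ 2 * (R ^ 2 - s ^ 2) * s := by
        rw [setIntegral_congr_fun measurableSet_Ioo fun s hs => by rw [integral_Ioo_id hs.2.le]]
        simp_rw [show ∀ s, B s ^ 2 * s * ((R ^ 2 - s ^ 2) / 2)
            = 1 / 2 * (B s ^ 2 * (R ^ 2 - s ^ 2) * s) from fun s => by ring]
        rw [integral_const_mul]
        ring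

theorem flux_square_integral_bound_general (B : ℝ → ℝ)
    (hint : ∀ R > (0 : ℝ), IntegrableOn (fun s => B s ^ 2 * s) (Set.Ioo 0 R))
    (R : ℝ) (hR : 0 < R) :
    (∫ x : EuclideanSpace ℝ (Fin 2) in {x | ‖x‖ ≤ R},
        ((∫ s in Set.Ioo (0 : ℝ) ‖x‖, B s * s) / ‖x‖) ^ 2)
      ≤ (Real.pi / 2) * ∫ s in Set.Ioo (0 : ℝ) R, B s ^ 2 * (R ^ 2 - s ^ 2) * s := by
  rw [EuclideanSpace.setIntegral_norm_le_fun_norm_fin_two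
    (fun r => ((∫ s in Ioo 0 r, B s * s) / r) ^ 2)]
  calc 2 * Real.pi * ∫ y in Ioo 0 R, y * ((∫ s in Ioo 0 y, B s * s) / y) ^ 2
      ≤ 2 * Real.pi * (1 / 4 * ∫ s in Ioo 0 R, B s ^ 2 * (R ^ 2 - s ^ 2) * s) := by
        gcongr
        exact integral_Ioo_mul_sq_flux_div_le (hint R hR)
    _ = Real.pi / 2 * ∫ s in Ioo 0 R, B s ^ 2 * (R ^ 2 - s ^ 2) * s := by ring

/-- Quantitative bound: if `s ↦ B(s)² s` is integrable on `(0,R)` for every `R > 0` and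
`Φ(r) = ∫₀^r B(s) s ds`, then for every `R > 0` one has
`∫_{|x| ≤ R} (Φ(|x|)/|x|)² dx ≤ (π/2) ∫₀^R B(s)² (R² − s²) s ds`. -/
theorem flux_square_integral_bound (B : ℝ → ℝ) (hB : Measurable B)
    (hint : ∀ R > (0 : ℝ), IntegrableOn (fun s => B s ^ 2 * s) (Set.Ioo 0 R))
    (R : ℝ) (hR : 0 < R) :
    (∫ x : EuclideanSpace ℝ (Fin 2) in {x | ‖x‖ ≤ R},
        ((∫ s in Set.Ioo (0 : ℝ) ‖x‖, B s * s) / ‖x‖) ^ 2)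
      ≤ (Real.pi / 2) * ∫ s in Set.Ioo (0 : ℝ) R, B s ^ 2 * (R ^ 2 - s ^ 2) * s :=
  flux_square_integral_bound_general B hint R hR
end

section
/- Let Φ : (0,∞) → ℝ and suppose there are constants λ₊ ∈ (0,∞) and σ₊ > 1 such that |Φ(r)| ≤ λ₊(1 + r^{σ₊}) for all r > 0. Then there exists a constant j₀ > 0 such that for every E > 0 there exists ε_E > 0 with the following property: for every j ∈ ℤ with |j| ≥ j₀ and every r with 0 < r ≤ ε_E |j|^{1/σ₊}, one has V_j(r) − E ≥ |j|^{2(σ₊−1)/σ₊}. -/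
/-!
Write `A = |j|`. Once `r ≤ (4λ₊)^{-1/σ₊} A^{1/σ₊}` and `A ≥ 4λ₊`, the growth condition gives
`|Φ(r)| ≤ λ₊ + A/4 ≤ A/2`, so the flux cannot cancel `j`: `|Φ(r) − j| ≥ A/2`. If moreover
`r ≤ A^{1/σ₊} / (2(1 + E))`, then `V_j(r) ≥ (A/2)² / r² ≥ (1 + E)² A^{2 − 2/σ₊}`, and since
`A^{2 − 2/σ₊} ≥ 1` this exceeds `A^{2(σ₊−1)/σ₊} + E`.
-/

open Real

lemma rpow_le_mul_of_le_rpow_mul_rpow {r c A σ : ℝ} (hr : 0 ≤ r) (hc : 0 ≤ c) (hA : 0 ≤ A)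
    (hσ : 0 < σ) (h : r ≤ c ^ (1 / σ) * A ^ (1 / σ)) : r ^ σ ≤ c * A := by
  rw [← mul_rpow hc hA, one_div] at h
  exact (le_rpow_inv_iff_of_pos hr (mul_nonneg hc hA) hσ).1 h

lemma abs_le_half_of_growth_bound {Φ : ℝ → ℝ} {lam σ r A : ℝ} (hlam : 0 < lam)
    (hA : 4 * lam ≤ A) (hσ : 0 < σ) (hr : 0 < r)
    (hrle : r ≤ (4 * lam)⁻¹ ^ (1 / σ) * A ^ (1 / σ)) (hΦ : |Φ r| ≤ lam * (1 + r ^ σ)) :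
    |Φ r| ≤ A / 2 := by
  have hrσ : r ^ σ ≤ (4 * lam)⁻¹ * A :=
    rpow_le_mul_of_le_rpow_mul_rpow hr.le (by positivity) (by linarith) hσ hrle
  have hlam_rσ : lam * r ^ σ ≤ A / 4 := by
    calc lam * r ^ σ ≤ lam * ((4 * lam)⁻¹ * A) := by gcongr
      _ = A / 4 := by field_simp
  linarith

lemma half_le_abs_sub_of_abs_le_half {x y : ℝ} (h : |x| ≤ |y| / 2) : |y| / 2 ≤ |x - y| := by
  have := abs_sub_abs_le_abs_sub y x
  rw [abs_sub_comm] at this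
  linarith

lemma mul_rpow_le_sq_div_sq {x r A c σ : ℝ} (hA : 0 < A) (hc : 0 < c) (hr : 0 < r)
    (hσ : σ ≠ 0) (hx : A / 2 ≤ |x|) (hrle : r ≤ (2 * c)⁻¹ * A ^ (1 / σ)) :
    c ^ 2 * A ^ (2 * (σ - 1) / σ) ≤ x ^ 2 / r ^ 2 := by
  have hexp : 2 * (σ - 1) / σ = 2 - 1 / σ * (2 : ℕ) := by field_simp; push_cast; ring
  calc c ^ 2 * A ^ (2 * (σ - 1) / σ) = (A / 2) ^ 2 / ((2 * c)⁻¹ * A ^ (1 / σ)) ^ 2 := by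
        rw [hexp, rpow_sub hA, rpow_mul_natCast hA.le, rpow_two]
        field_simp
    _ ≤ x ^ 2 / r ^ 2 := by
        rw [← sq_abs x]
        gcongr

/-- Interior bound on the effective potential `V_j(r) = (Φ(r) − j)²/r²`:
under the interior growth condition `|Φ(r)| ≤ λ₊(1 + r^{σ₊})` with `σ₊ > 1`,
there is `j₀ > 0` such that for every `E > 0` there is `ε_E > 0` so that for
all `j ∈ ℤ` with `|j| ≥ j₀` and `0 < r ≤ ε_E |j|^{1/σ₊}` one has
`V_j(r) − E ≥ |j|^{2(σ₊−1)/σ₊}`. -/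
theorem effective_potential_interior_bound (Φ : ℝ → ℝ) (lamp σp : ℝ)
    (hlam : 0 < lamp) (hσ : 1 < σp)
    (hΦ : ∀ r > (0 : ℝ), |Φ r| ≤ lamp * (1 + r ^ σp)) :
    ∃ j₀ : ℝ, 0 < j₀ ∧ ∀ E > (0 : ℝ), ∃ ε > (0 : ℝ), ∀ j : ℤ, j₀ ≤ |(j : ℝ)| →
      ∀ r : ℝ, 0 < r → r ≤ ε * |(j : ℝ)| ^ (1 / σp) →
        |(j : ℝ)| ^ (2 * (σp - 1) / σp) ≤ (Φ r - (j : ℝ)) ^ 2 / r ^ 2 - E := by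
  have hσ0 : 0 < σp := by linarith
  refine ⟨max 1 (4 * lamp), by positivity, fun E hE => ?_⟩
  refine ⟨min (2 * (1 + E))⁻¹ ((4 * lamp)⁻¹ ^ (1 / σp)), by positivity, ?_⟩
  intro j hj r hr hrle
  have hA1 : 1 ≤ |(j : ℝ)| := (le_max_left _ _).trans hj
  have hrle_of_le {ε : ℝ} (h : min (2 * (1 + E))⁻¹ ((4 * lamp)⁻¹ ^ (1 / σp)) ≤ ε) :
      r ≤ ε * |(j : ℝ)| ^ (1 / σp) := hrle.trans (by gcongr)
  have hΦr : |Φ r| ≤ |(j : ℝ)| / 2 :=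
    abs_le_half_of_growth_bound hlam ((le_max_right _ _).trans hj) hσ0 hr
      (hrle_of_le (min_le_right _ _)) (hΦ r hr)
  have hV : (1 + E) ^ 2 * |(j : ℝ)| ^ (2 * (σp - 1) / σp) ≤ (Φ r - j) ^ 2 / r ^ 2 :=
    mul_rpow_le_sq_div_sq (by linarith) (by linarith) hr hσ0.ne'
      (half_le_abs_sub_of_abs_le_half hΦr) (hrle_of_le (min_le_left _ _))
  have hpow : 1 ≤ |(j : ℝ)| ^ (2 * (σp - 1) / σp) :=
    one_le_rpow hA1 (div_nonneg (by linarith) hσ0.le)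
  nlinarith [mul_le_mul_of_nonneg_left hpow (by positivity : 0 ≤ 2 * E + E ^ 2)]
end

section
/- Let Φ : (0,∞) → ℝ and suppose there are constants r₀ > 1, λ₋ > 0 and σ₋ > 1 such that |Φ(r)| ≥ λ₋ r^{σ₋} for all r ≥ r₀. Then for every E > 0 there exist constants η_E > 1 and c_E > 0 such that for every j ∈ ℤ and every r ≥ η_E (1 + |j|)^{1/σ₋}, one has V_j(r) − E ≥ c_E · r^{2(σ₋ − 1)}. -/
/-- Exterior bound on the effective potential `V_j(r) = (Φ(r) − j)²/r²`:
under the exterior growth condition `|Φ(r)| ≥ λ₋ r^{σ₋}` for `r ≥ r₀`, with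
`r₀ > 1`, `λ₋ > 0`, `σ₋ > 1`, for every `E > 0` there exist `η_E > 1` and
`c_E > 0` such that for every `j ∈ ℤ` and every `r ≥ η_E (1 + |j|)^{1/σ₋}` one
has `V_j(r) − E ≥ c_E r^{2(σ₋−1)}`. -/
theorem effective_potential_exterior_bound (Φ : ℝ → ℝ) (r₀ lamm σm : ℝ)
    (hr₀ : 1 < r₀) (hlam : 0 < lamm) (hσ : 1 < σm)
    (hΦ : ∀ r ≥ r₀, lamm * r ^ σm ≤ |Φ r|) :
    ∀ E > (0 : ℝ), ∃ η > (1 : ℝ), ∃ c > (0 : ℝ), ∀ j : ℤ, ∀ r : ℝ,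
      η * (1 + |(j : ℝ)|) ^ (1 / σm) ≤ r →
        c * r ^ (2 * (σm - 1)) ≤ (Φ r - (j : ℝ)) ^ 2 / r ^ 2 - E := by
  intro E hE
  have hσ0 : 0 < σm := by linarith
  set σ2 : ℝ := 2 * (σm - 1) with hσ2def
  have hσ2 : 0 < σ2 := by rw [hσ2def]; linarith
  set a : ℝ := (2 / lamm) ^ (σm⁻¹) + 1 with ha
  set b : ℝ := (8 * E / lamm ^ 2) ^ (σ2⁻¹) + 1 with hb
  set η : ℝ := max r₀ (max a b) with hηdef
  have hη1 : 1 < η := lt_of_lt_of_le hr₀ (le_max_left _ _)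
  have hη0 : 0 < η := by linarith
  refine ⟨η, hη1, lamm ^ 2 / 8, by positivity, ?_⟩
  intro j r hr
  have habs : (0:ℝ) ≤ |(j:ℝ)| := abs_nonneg _
  have hbase : (1:ℝ) ≤ 1 + |(j:ℝ)| := by linarith
  have h1 : (1:ℝ) ≤ (1 + |(j:ℝ)|) ^ (1/σm) :=
    Real.one_le_rpow hbase (by positivity)
  have hrη : η ≤ r := le_trans (le_mul_of_one_le_right hη0.le h1) hr
  have hr0 : r₀ ≤ r := le_trans (le_max_left _ _) hrη
  have hrpos : 0 < r := lt_of_lt_of_le (by linarith : (0:ℝ) < r₀) hr0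
  -- bound on |j|
  have htσ : ((1 + |(j:ℝ)|) ^ (1/σm)) ^ σm = 1 + |(j:ℝ)| := by
    rw [one_div, Real.rpow_inv_rpow (by positivity) (ne_of_gt hσ0)]
  have htle : (1 + |(j:ℝ)|) ^ (1/σm) ≤ r / η := by
    rw [le_div_iff₀ hη0]; linarith [hr]
  have hjle : 1 + |(j:ℝ)| ≤ r ^ σm / η ^ σm := by
    calc 1 + |(j:ℝ)| = ((1 + |(j:ℝ)|) ^ (1/σm)) ^ σm := htσ.symm
      _ ≤ (r / η) ^ σm := Real.rpow_le_rpow (by positivity) htle hσ0.le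
      _ = r ^ σm / η ^ σm := Real.div_rpow hrpos.le hη0.le σm
  -- η^σm ≥ 2/λ
  have haη : a ≤ η := le_trans (le_max_left a b) (le_max_right _ _)
  have hbη : b ≤ η := le_trans (le_max_right a b) (le_max_right _ _)
  have hησ : 2 / lamm ≤ η ^ σm := by
    calc 2 / lamm = ((2 / lamm) ^ (σm⁻¹)) ^ σm := by
          rw [Real.rpow_inv_rpow (by positivity) (ne_of_gt hσ0)]
      _ ≤ η ^ σm := Real.rpow_le_rpow (by positivity) (by rw [ha] at haη; linarith) hσ0.le
  have hησpos : 0 < η ^ σm := Real.rpow_pos_of_pos hη0 _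
  have hrσpos : 0 < r ^ σm := Real.rpow_pos_of_pos hrpos _
  -- |j| ≤ (λ/2) r^σm
  have hjhalf : |(j:ℝ)| ≤ lamm / 2 * r ^ σm := by
    have h2 : r ^ σm / η ^ σm ≤ lamm / 2 * r ^ σm := by
      rw [div_le_iff₀ hησpos]
      have : 2 ≤ lamm * η ^ σm := by
        rw [div_le_iff₀ hlam] at hησ; linarith
      nlinarith
    linarith
  -- lower bound on |Φ r - j|
  have hkey : lamm / 2 * r ^ σm ≤ |Φ r - (j:ℝ)| := by
    have := hΦ r hr0
    have h3 : |Φ r| - |(j:ℝ)| ≤ |Φ r - (j:ℝ)| := abs_sub_abs_le_abs_sub _ _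
    linarith
  -- square it
  have hsq : (lamm / 2) ^ 2 * (r ^ σm) ^ 2 ≤ (Φ r - (j:ℝ)) ^ 2 := by
    have h4 : (lamm / 2 * r ^ σm) ^ 2 ≤ |Φ r - (j:ℝ)| ^ 2 :=
      pow_le_pow_left₀ (by positivity) hkey 2
    rw [sq_abs] at h4
    calc (lamm / 2) ^ 2 * (r ^ σm) ^ 2 = (lamm / 2 * r ^ σm) ^ 2 := by ring
      _ ≤ _ := h4
  have hpow2 : (r ^ σm) ^ 2 = r ^ σ2 * r ^ 2 := by
    have : (r:ℝ) ^ (2:ℕ) = r ^ ((2:ℕ):ℝ) := (Real.rpow_natCast r 2).symm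
    rw [sq, ← Real.rpow_add hrpos, this, ← Real.rpow_add hrpos, hσ2def]
    norm_num
    ring_nf
  -- E bound
  have hEb : E ≤ lamm ^ 2 / 8 * r ^ σ2 := by
    have h5 : 8 * E / lamm ^ 2 ≤ r ^ σ2 := by
      calc 8 * E / lamm ^ 2 = ((8 * E / lamm ^ 2) ^ (σ2⁻¹)) ^ σ2 := by
            rw [Real.rpow_inv_rpow (by positivity) (ne_of_gt hσ2)]
        _ ≤ r ^ σ2 := Real.rpow_le_rpow (by positivity)
            (by rw [hb] at hbη; linarith) hσ2.le
    rw [div_le_iff₀ (by positivity : (0:ℝ) < lamm ^ 2)] at h5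
    nlinarith
  -- finish
  have hr2pos : (0:ℝ) < r ^ 2 := by positivity
  rw [le_sub_iff_add_le, ← sub_nonneg]
  have hdiv : (lamm / 2) ^ 2 * r ^ σ2 ≤ (Φ r - (j:ℝ)) ^ 2 / r ^ 2 := by
    rw [le_div_iff₀ hr2pos]
    calc (lamm / 2) ^ 2 * r ^ σ2 * r ^ 2 = (lamm / 2) ^ 2 * (r ^ σ2 * r ^ 2) := by ring
      _ = (lamm / 2) ^ 2 * (r ^ σm) ^ 2 := by rw [hpow2]
      _ ≤ _ := hsq
  linarith
end

section
/- Let B : [0,∞) → ℝ be measurable such that x ↦ B(|x|) is locally square integrable on ℝ², let Φ(r) = ∫₀^r B(s) s ds, and let A : ℝ² \ {0} → ℝ² be the Poincaré-gauge vector potential A(x) = (Φ(|x|)/|x|²)(−x₂, x₁). Then for every smooth compactly supported φ : ℝ² → ℂ, ∫_{ℝ²} |(−i∇φ)(x) − A(x)φ(x)|² dx = ∫_{ℝ²} |(x/|x|)·∇φ(x)|² dx + ∫_{ℝ²} (1/|x|²) · |Φ(|x|) φ(x) − (Lφ)(x)|² dx, where (Lφ)(x) = −i (x₁ ∂₂φ(x)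 − x₂ ∂₁φ(x)) is the angular momentum operator. -/
open MeasureTheory

/-- The partial derivative `∂_j φ` of a function `φ : ℝ² → ℂ`. -/
noncomputable def partialDeriv' (j : Fin 2)
    (φ : EuclideanSpace ℝ (Fin 2) → ℂ) : EuclideanSpace ℝ (Fin 2) → ℂ :=
  fun x => fderiv ℝ φ x (EuclideanSpace.single j (1 : ℝ))


open Set
open scoped ENNReal

local notation "E2" => EuclideanSpace ℝ (Fin 2)

lemma magKey (u v p : ℂ) (c r x0 x1 : ℝ) (hr : r ≠ 0) (h : x0^2+x1^2 = r^2) :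
    ‖-Complex.I*u - ((c/r^2*(-x1) : ℝ):ℂ)*p‖^2 + ‖-Complex.I*v - ((c/r^2*x0 : ℝ):ℂ)*p‖^2
      = ‖((r:ℂ))⁻¹*((x0:ℂ)*u+(x1:ℂ)*v)‖^2
        + (1/r^2)*‖((c:ℝ):ℂ)*p - (-Complex.I*((x0:ℂ)*v-(x1:ℂ)*u))‖^2 := by
  have hr2 : x0^2 + x1^2 ≠ 0 := by rw [h]; positivity
  rw [norm_mul, mul_pow, norm_inv, Complex.norm_real, Real.norm_eq_abs, inv_pow, sq_abs]
  simp only [Complex.sq_norm, Complex.normSq_apply]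
  rw [← h]
  simp only [Complex.sub_re, Complex.sub_im, Complex.add_re, Complex.add_im, Complex.mul_re,
    Complex.mul_im, Complex.neg_re, Complex.neg_im, Complex.I_re, Complex.I_im,
    Complex.ofReal_re, Complex.ofReal_im]
  field_simp
  ring

lemma lintegral_norm_2d (g : ℝ → ℝ≥0∞) (hg : Measurable g) :
    ∫⁻ x : E2, g ‖x‖
      = (volume : Measure E2).toSphere univ * ∫⁻ r in Ioi (0:ℝ), ENNReal.ofReal r * g r := by
  have hdim : Module.finrank ℝ E2 = 2 := by simp [finrank_euclideanSpace]
  have hmeas : Measurable fun p : Metric.sphere (0:E2) 1 × Ioi (0:ℝ) => g p.2 :=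
    (hg.comp measurable_subtype_coe).comp measurable_snd
  calc ∫⁻ x : E2, g ‖x‖
      = ∫⁻ x : ({0}ᶜ : Set E2), g ‖x.1‖ ∂((volume : Measure E2).comap (↑)) := by
        rw [lintegral_subtype_comap (measurableSet_singleton _).compl fun x : E2 ↦ g ‖x‖,
          restrict_compl_singleton]
    _ = ∫⁻ p : Metric.sphere (0:E2) 1 × Ioi (0:ℝ), g p.2
          ∂((volume : Measure E2).toSphere.prod (.volumeIoiPow (Module.finrank ℝ E2 - 1))) := by
        rw [← (volume : Measure E2).measurePreserving_homeomorphUnitSphereProd.lintegral_comp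
          hmeas]
        exact lintegral_congr fun x => by simp
    _ = (volume : Measure E2).toSphere univ
          * ∫⁻ r : Ioi (0:ℝ), g r ∂(Measure.volumeIoiPow (Module.finrank ℝ E2 - 1)) := by
        rw [lintegral_prod _ hmeas.aemeasurable]
        simp [lintegral_const, mul_comm]
    _ = (volume : Measure E2).toSphere univ * ∫⁻ r in Ioi (0:ℝ), ENNReal.ofReal r * g r := by
      congr 1
      rw [hdim, Measure.volumeIoiPow,
        lintegral_withDensity_eq_lintegral_mul _
          ((measurable_subtype_coe.pow_const _).ennreal_ofReal)
          (show Measurable fun r : Ioi (0:ℝ) => g r.1 from hg.comp measurable_subtype_coe)]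
      rw [show (fun r : Ioi (0:ℝ) => ((fun r : Ioi (0:ℝ) => ENNReal.ofReal (r.1 ^ (2-1)))
          * fun r : Ioi (0:ℝ) => g r.1) r) = fun r : Ioi (0:ℝ) =>
          (fun s : ℝ => ENNReal.ofReal s * g s) r.1 by funext r; simp]
      exact lintegral_subtype_comap measurableSet_Ioi fun s : ℝ => ENNReal.ofReal s * g s

lemma radial_sq_integrable (B : ℝ → ℝ) (hB : Measurable B)
    (hloc : ∀ R > (0 : ℝ), IntegrableOn (fun x : E2 => B ‖x‖ ^ 2) {x | ‖x‖ ≤ R})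
    {R : ℝ} (hR : 0 < R) :
    IntegrableOn (fun s => B s ^ 2 * s) (Ioo 0 R) := by
  set g : ℝ → ℝ≥0∞ := indicator (Ioo 0 R) (fun s => ENNReal.ofReal (B s ^ 2)) with hgdef
  have hgm : Measurable g :=
    ((hB.pow_const 2).ennreal_ofReal).indicator measurableSet_Ioo
  have hsm : MeasurableSet {x : E2 | ‖x‖ ≤ R} :=
    (isClosed_le (continuous_norm) continuous_const).measurableSet
  have hlhs : ∫⁻ x : E2, g ‖x‖ < ∞ := by
    have hle : (fun x : E2 => g ‖x‖) ≤ fun x : E2 =>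
        indicator {x : E2 | ‖x‖ ≤ R} (fun x => (‖B ‖x‖ ^ 2‖₊ : ℝ≥0∞)) x := by
      intro x
      dsimp only
      by_cases hx : ‖x‖ ∈ Ioo (0:ℝ) R
      · rw [hgdef, indicator_of_mem hx, indicator_of_mem (show x ∈ {x : E2 | ‖x‖ ≤ R} from le_of_lt hx.2)]
        exact Real.ofReal_le_enorm _
      · rw [hgdef, indicator_of_notMem hx]
        exact zero_le
    calc ∫⁻ x : E2, g ‖x‖ ≤ ∫⁻ x : E2, indicator {x : E2 | ‖x‖ ≤ R} (fun x => (‖B ‖x‖ ^ 2‖₊ : ℝ≥0∞)) x :=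
          lintegral_mono hle
      _ = ∫⁻ x in {x : E2 | ‖x‖ ≤ R}, (‖B ‖x‖ ^ 2‖₊ : ℝ≥0∞) := lintegral_indicator hsm _
      _ < ∞ := (hloc R hR).2
  rw [lintegral_norm_2d g hgm] at hlhs
  have hC : (volume : Measure E2).toSphere univ ≠ 0 := by
    rw [Measure.toSphere_apply_univ]
    have h1 : (volume : Measure E2) (Metric.ball 0 1) ≠ 0 :=
      (Metric.measure_ball_pos _ _ one_pos).ne'
    have h2 : (Module.finrank ℝ E2 : ℝ≥0∞) ≠ 0 := by
      simp [finrank_euclideanSpace]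
    exact mul_ne_zero h2 h1
  have hX : ∫⁻ r in Ioi (0:ℝ), ENNReal.ofReal r * g r < ∞ := by
    by_contra h
    rw [not_lt, top_le_iff] at h
    rw [h, ENNReal.mul_top hC] at hlhs
    exact (lt_irrefl _ hlhs).elim
  have hXeq : ∫⁻ r in Ioi (0:ℝ), ENNReal.ofReal r * g r
      = ∫⁻ r in Ioo (0:ℝ) R, ENNReal.ofReal (B r ^ 2) * ENNReal.ofReal r := by
    have : (fun r : ℝ => ENNReal.ofReal r * g r)
        = indicator (Ioo 0 R) (fun r => ENNReal.ofReal (B r ^ 2) * ENNReal.ofReal r) := by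
      funext r
      by_cases hr : r ∈ Ioo (0:ℝ) R
      · rw [hgdef, indicator_of_mem hr, indicator_of_mem hr, mul_comm]
      · rw [hgdef, indicator_of_notMem hr, indicator_of_notMem hr, mul_zero]
    rw [this, lintegral_indicator measurableSet_Ioo, Measure.restrict_restrict measurableSet_Ioo,
      inter_eq_self_of_subset_left fun r hr => hr.1]
  refine ⟨((hB.pow_const 2).mul measurable_id).aestronglyMeasurable, ?_⟩
  rw [hasFiniteIntegral_iff_ofReal ?_]
  · have : ∀ r ∈ Ioo (0:ℝ) R, ENNReal.ofReal (B r ^ 2 * r) = ENNReal.ofReal (B r ^ 2) * ENNReal.ofReal r := by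
      intro r hr
      rw [← ENNReal.ofReal_mul (by positivity)]
    rw [setLIntegral_congr_fun measurableSet_Ioo this]
    rw [hXeq] at hX
    exact hX
  · filter_upwards [ae_restrict_mem measurableSet_Ioo] with r hr
    have := hr.1
    positivity

lemma Phi_continuous (B : ℝ → ℝ) (hB : Measurable B)
    (hP : ∀ R > (0:ℝ), IntegrableOn (fun s => B s ^ 2 * s) (Ioo 0 R)) :
    Continuous (fun t : ℝ => ∫ s in Ioo (0:ℝ) t, B s * s) := by
  set g : ℝ → ℝ := indicator (Ioi 0) (fun s => B s * s) with hgdef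
  have hBs : ∀ R > (0:ℝ), IntegrableOn (fun s => B s * s) (Ioo 0 R) := by
    intro R hR
    have hid : IntegrableOn (fun s : ℝ => s) (Ioo 0 R) :=
      (intervalIntegral.intervalIntegrable_id (μ := volume) (a := 0) (b := R)).1.mono_set Ioo_subset_Ioc_self
    have hmaj : IntegrableOn (fun s => (B s ^ 2 * s + s)/2) (Ioo 0 R) :=
      ((hP R hR).add hid).div_const 2
    refine Integrable.mono' hmaj ((hB.mul measurable_id).aestronglyMeasurable) ?_
    filter_upwards [ae_restrict_mem measurableSet_Ioo] with s hs
    have h1 : ‖B s * s‖ = |B s| * s := by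
      rw [Real.norm_eq_abs, abs_mul, abs_of_pos hs.1]
    rw [h1, ← sq_abs (B s)]
    nlinarith [mul_nonneg (sq_nonneg (|B s| - 1)) hs.1.le]
  have hint : ∀ a b : ℝ, IntervalIntegrable g volume a b := by
    intro a b
    rw [intervalIntegrable_iff]
    have h1 : IntegrableOn (fun s => B s * s) (Ioi 0 ∩ uIoc a b) volume := by
      refine (hBs (|a| + |b| + 1) (by positivity)).mono_set ?_
      rintro s ⟨hs0, hs1⟩
      rw [Set.mem_uIoc] at hs1
      constructor
      · exact hs0
      · rcases hs1 with h | h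
        · have := h.2
          have := le_abs_self b
          have := abs_nonneg a
          linarith
        · have := h.2
          have := le_abs_self a
          have := abs_nonneg b
          linarith
    have h2 : IntegrableOn (fun s => B s * s) (Ioi 0) (volume.restrict (uIoc a b)) := by
      rw [IntegrableOn, Measure.restrict_restrict measurableSet_Ioi]
      exact h1
    exact (integrable_indicator_iff measurableSet_Ioi).2 h2
  have hΦ : (fun t : ℝ => ∫ s in Ioo (0:ℝ) t, B s * s) = fun t => ∫ s in (0:ℝ)..t, g s := by
    funext t
    rcases le_or_gt 0 t with h | h
    · calc ∫ s in Ioo (0:ℝ) t, B s * s = ∫ s in Ioo (0:ℝ) t, g s :=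
            setIntegral_congr_fun measurableSet_Ioo
              (fun s hs => (indicator_of_mem hs.1 _).symm)
        _ = ∫ s in Ioc (0:ℝ) t, g s := (integral_Ioc_eq_integral_Ioo).symm
        _ = ∫ s in (0:ℝ)..t, g s := (intervalIntegral.integral_of_le h).symm
    · have h0 : ∫ s in Ioc t (0:ℝ), g s = 0 := by
        rw [setIntegral_congr_fun measurableSet_Ioc
          (fun s hs => indicator_of_notMem (by simpa using hs.2) (fun s => B s * s))]
        simp
      rw [intervalIntegral.integral_of_ge h.le, h0, neg_zero,
        Set.Ioo_eq_empty (not_lt.2 h.le)]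
      simp
  rw [hΦ]
  exact intervalIntegral.continuous_primitive hint 0


lemma Phi_bound (B : ℝ → ℝ) (hB : Measurable B)
    (hP : ∀ R > (0:ℝ), IntegrableOn (fun s => B s ^ 2 * s) (Ioo 0 R))
    {R t : ℝ} (hR : 0 < R) (ht : 0 < t) (htR : t ≤ R) :
    |∫ s in Ioo (0:ℝ) t, B s * s|
      ≤ t * ((∫ s in Ioo (0:ℝ) R, B s ^ 2 * s)/2 + 1/4) := by
  have hPt : IntegrableOn (fun s => B s ^ 2 * s) (Ioo 0 t) :=
    (hP R hR).mono_set (Ioo_subset_Ioo le_rfl htR)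
  have hid : IntegrableOn (fun s : ℝ => s) (Ioo 0 t) :=
    (intervalIntegral.intervalIntegrable_id (μ := volume) (a := 0) (b := t)).1.mono_set Ioo_subset_Ioc_self
  have hmaj : IntegrableOn (fun s => (t/2)*(B s ^ 2 * s) + (1/(2*t))*s) (Ioo 0 t) :=
    (hPt.const_mul _).add (hid.const_mul _)
  calc |∫ s in Ioo (0:ℝ) t, B s * s| ≤ ∫ s in Ioo (0:ℝ) t, |B s * s| :=
        by simpa only [Real.norm_eq_abs] using norm_integral_le_integral_norm (μ := volume.restrict (Ioo 0 t)) (fun s => B s * s)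
    _ ≤ ∫ s in Ioo (0:ℝ) t, ((t/2)*(B s ^ 2 * s) + (1/(2*t))*s) := by
        refine integral_mono_of_nonneg (Filter.Eventually.of_forall fun s => abs_nonneg _)
          hmaj ?_
        filter_upwards [ae_restrict_mem measurableSet_Ioo] with s hs
        have h2 : |B s * s| = |B s| * s := by rw [abs_mul, abs_of_pos hs.1]
        rw [h2]
        have heq : (t/2)*(B s ^ 2 * s) + (1/(2*t))*s = (t^2*(B s ^ 2 * s) + s)/(2*t) := by
          field_simp
        rw [heq, le_div_iff₀ (by positivity), ← sq_abs (B s)]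
        nlinarith [mul_nonneg (sq_nonneg (t*|B s| - 1)) hs.1.le]
    _ = (t/2) * (∫ s in Ioo (0:ℝ) t, B s ^ 2 * s) + (1/(2*t)) * (t^2/2) := by
        rw [integral_add (hPt.const_mul _) (hid.const_mul _), integral_const_mul, integral_const_mul]
        congr 1
        have hidint : ∫ s in Ioo (0:ℝ) t, s = t^2/2 := by
          rw [← integral_Ioc_eq_integral_Ioo, ← intervalIntegral.integral_of_le ht.le, integral_id]
          norm_num
        rw [hidint]
    _ ≤ (t/2) * (∫ s in Ioo (0:ℝ) R, B s ^ 2 * s) + (1/(2*t)) * (t^2/2) := by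
        have hmono : (∫ s in Ioo (0:ℝ) t, B s ^ 2 * s) ≤ ∫ s in Ioo (0:ℝ) R, B s ^ 2 * s := by
          refine setIntegral_mono_set (hP R hR) ?_ ((Ioo_subset_Ioo le_rfl htR).eventuallyLE)
          filter_upwards [ae_restrict_mem measurableSet_Ioo] with s hs
          exact mul_nonneg (sq_nonneg _) hs.1.le
        exact add_le_add_left (mul_le_mul_of_nonneg_left hmono (by positivity)) _
    _ = t * ((∫ s in Ioo (0:ℝ) R, B s ^ 2 * s)/2 + 1/4) := by
        field_simp
        ring


noncomputable def F1' (B : ℝ → ℝ) (φ : EuclideanSpace ℝ (Fin 2) → ℂ) :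
    EuclideanSpace ℝ (Fin 2) → ℝ := fun x =>
  ‖-Complex.I * partialDeriv' 0 φ x
      - (↑((∫ s in Set.Ioo (0 : ℝ) ‖x‖, B s * s) / ‖x‖ ^ 2 * (-(x 1))) : ℂ) * φ x‖ ^ 2

noncomputable def F2' (B : ℝ → ℝ) (φ : EuclideanSpace ℝ (Fin 2) → ℂ) :
    EuclideanSpace ℝ (Fin 2) → ℝ := fun x =>
  ‖-Complex.I * partialDeriv' 1 φ x
      - (↑((∫ s in Set.Ioo (0 : ℝ) ‖x‖, B s * s) / ‖x‖ ^ 2 * (x 0)) : ℂ) * φ x‖ ^ 2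

noncomputable def F3' (φ : EuclideanSpace ℝ (Fin 2) → ℂ) :
    EuclideanSpace ℝ (Fin 2) → ℝ := fun x =>
  ‖((‖x‖ : ℂ))⁻¹ * ((x 0 : ℂ) * partialDeriv' 0 φ x + (x 1 : ℂ) * partialDeriv' 1 φ x)‖ ^ 2

noncomputable def F4' (B : ℝ → ℝ) (φ : EuclideanSpace ℝ (Fin 2) → ℂ) :
    EuclideanSpace ℝ (Fin 2) → ℝ := fun x =>
  (1 / ‖x‖ ^ 2) *
    ‖(↑(∫ s in Set.Ioo (0 : ℝ) ‖x‖, B s * s) : ℂ) * φ x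
      - (-Complex.I * ((x 0 : ℂ) * partialDeriv' 1 φ x - (x 1 : ℂ) * partialDeriv' 0 φ x))‖ ^ 2

/-- Decomposition of the magnetic kinetic energy form in the Poincaré gauge:
with `Φ(r) = ∫₀^r B(s) s ds` and `A(x) = (Φ(|x|)/|x|²)(−x₂, x₁)`, for every smooth
compactly supported `φ : ℝ² → ℂ`,
`∫ |(−i∇ − A)φ|² = ∫ |(x/|x|)·∇φ|² + ∫ |Φ(|x|)φ − Lφ|²/|x|²`,
where `Lφ = −i(x₁∂₂φ − x₂∂₁φ)` is the angular momentum operator. -/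
theorem magnetic_form_radial_angular_decomposition (B : ℝ → ℝ) (hB : Measurable B)
    (hloc : ∀ R > (0 : ℝ), IntegrableOn
        (fun x : EuclideanSpace ℝ (Fin 2) => B ‖x‖ ^ 2) {x | ‖x‖ ≤ R})
    (φ : EuclideanSpace ℝ (Fin 2) → ℂ) (hφ : ContDiff ℝ (⊤ : ℕ∞) φ)
    (hsupp : HasCompactSupport φ) :
    (∫ x : EuclideanSpace ℝ (Fin 2),
        ‖-Complex.I * partialDeriv' 0 φ x
            - (↑((∫ s in Set.Ioo (0 : ℝ) ‖x‖, B s * s) / ‖x‖ ^ 2 * (-(x 1))) : ℂ) * φ x‖ ^ 2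
        + ‖-Complex.I * partialDeriv' 1 φ x
            - (↑((∫ s in Set.Ioo (0 : ℝ) ‖x‖, B s * s) / ‖x‖ ^ 2 * (x 0)) : ℂ) * φ x‖ ^ 2)
      = (∫ x : EuclideanSpace ℝ (Fin 2),
          ‖((‖x‖ : ℂ))⁻¹ * ((x 0 : ℂ) * partialDeriv' 0 φ x
              + (x 1 : ℂ) * partialDeriv' 1 φ x)‖ ^ 2)
        + ∫ x : EuclideanSpace ℝ (Fin 2),
            (1 / ‖x‖ ^ 2) *
              ‖(↑(∫ s in Set.Ioo (0 : ℝ) ‖x‖, B s * s) : ℂ) * φ x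
                - (-Complex.I * ((x 0 : ℂ) * partialDeriv' 1 φ x
                    - (x 1 : ℂ) * partialDeriv' 0 φ x))‖ ^ 2 := by
  classical
  have hP : ∀ R > (0:ℝ), IntegrableOn (fun s => B s ^ 2 * s) (Ioo 0 R) :=
    fun R hR => radial_sq_integrable B hB hloc hR
  have hΦc : Continuous (fun t : ℝ => ∫ s in Ioo (0:ℝ) t, B s * s) := Phi_continuous B hB hP
  -- continuity of pieces
  have hφcont : Continuous φ := hφ.continuous
  have hdc : Continuous (fderiv ℝ φ) := hφ.continuous_fderiv (by simp)
  have hpdc : ∀ j : Fin 2, Continuous (partialDeriv' j φ) := fun j =>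
    (ContinuousLinearMap.apply ℝ ℂ (EuclideanSpace.single j (1:ℝ))).continuous.comp hdc
  have hprojc : ∀ i : Fin 2, Continuous (fun x : E2 => x i) := fun i =>
    (EuclideanSpace.proj (i : Fin 2) : E2 →L[ℝ] ℝ).continuous
  have hΦnc : Continuous (fun x : E2 => ∫ s in Ioo (0:ℝ) ‖x‖, B s * s) :=
    hΦc.comp continuous_norm
  -- support radius
  obtain ⟨R0, hR0⟩ := (Metric.isBounded_iff_subset_closedBall 0).1 hsupp.isBounded
  set R : ℝ := max R0 0 + 1 with hRdef
  have hR : 0 < R := by positivity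
  have hout : ∀ x : E2, R ≤ ‖x‖ → φ x = 0 ∧ fderiv ℝ φ x = 0 := by
    intro x hx
    have hnot : x ∉ tsupport φ := by
      intro h
      have h1 := mem_closedBall_zero_iff.1 (hR0 h)
      have h2 : R0 ≤ max R0 0 := le_max_left _ _
      rw [hRdef] at hx
      linarith
    refine ⟨image_eq_zero_of_notMem_tsupport hnot, ?_⟩
    by_contra h
    exact hnot (support_fderiv_subset ℝ (Function.mem_support.2 h))
  set G : ℝ := ∫ s in Ioo (0:ℝ) R, B s ^ 2 * s with hGdef
  have hG0 : 0 ≤ G :=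
    setIntegral_nonneg measurableSet_Ioo fun s hs => mul_nonneg (sq_nonneg _) hs.1.le
  set C : ℝ := G/2 + 1/4 with hCdef
  have hC0 : 0 ≤ C := by positivity
  have hΦb : ∀ t : ℝ, 0 < t → t ≤ R → |∫ s in Ioo (0:ℝ) t, B s * s| ≤ t * C :=
    fun t h1 h2 => Phi_bound B hB hP hR h1 h2
  -- coordinates vs norm
  have hnorm2 : ∀ x : E2, (x 0)^2 + (x 1)^2 = ‖x‖^2 := by
    intro x
    rw [EuclideanSpace.norm_eq, Real.sq_sqrt (Finset.sum_nonneg fun i _ => sq_nonneg _)]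
    simp [Fin.sum_univ_two, Real.norm_eq_abs, sq_abs]
  have habscoord : ∀ x : E2, |x 0| ≤ ‖x‖ ∧ |x 1| ≤ ‖x‖ := by
    intro x
    have h := hnorm2 x
    have hn : 0 ≤ ‖x‖ := norm_nonneg x
    constructor
    · nlinarith [sq_abs (x 0), abs_nonneg (x 0), sq_nonneg (x 1)]
    · nlinarith [sq_abs (x 1), abs_nonneg (x 1), sq_nonneg (x 0)]
  show (∫ x : E2, F1' B φ x + F2' B φ x) = (∫ x : E2, F3' φ x) + ∫ x : E2, F4' B φ x
  -- key pointwise identity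
  have hkey : ∀ x : E2, x ≠ 0 → F1' B φ x + F2' B φ x = F3' φ x + F4' B φ x := by
    intro x hx
    have hr : ‖x‖ ≠ 0 := norm_ne_zero_iff.2 hx
    simpa only [F1', F2', F3', F4'] using
      magKey (partialDeriv' 0 φ x) (partialDeriv' 1 φ x) (φ x)
        (∫ s in Ioo (0:ℝ) ‖x‖, B s * s) ‖x‖ (x 0) (x 1) hr (hnorm2 x)
  have hae0 : ∀ᵐ x : E2, x ≠ (0:E2) := by
    have h0 : (volume : Measure E2) {(0:E2)} = 0 := measure_singleton 0
    have hset : {x : E2 | ¬ x ≠ 0} = {0} := by ext y; simp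
    rw [ae_iff, hset]
    exact h0
  -- measurability
  have hmcoefC : Measurable fun x : E2 => ((∫ s in Ioo (0:ℝ) ‖x‖, B s * s) / ‖x‖^2 : ℝ) :=
    (hΦnc.measurable).div ((continuous_norm.pow 2).measurable)
  have hmF1 : Measurable (F1' B φ) := by
    unfold F1'
    exact ((((hpdc 0).measurable.const_mul (-Complex.I)).sub
      ((Complex.measurable_ofReal.comp (hmcoefC.mul (hprojc 1).neg.measurable)).mul
        hφcont.measurable)).norm.pow_const 2)
  have hmF2 : Measurable (F2' B φ) := by
    unfold F2'
    exact ((((hpdc 1).measurable.const_mul (-Complex.I)).sub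
      ((Complex.measurable_ofReal.comp (hmcoefC.mul (hprojc 0).measurable)).mul
        hφcont.measurable)).norm.pow_const 2)
  have hmF3 : Measurable (F3' φ) := by
    unfold F3'
    exact (((Complex.measurable_ofReal.comp measurable_norm).inv.mul
      (((Complex.measurable_ofReal.comp (hprojc 0).measurable).mul (hpdc 0).measurable).add
        ((Complex.measurable_ofReal.comp (hprojc 1).measurable).mul
          (hpdc 1).measurable))).norm.pow_const 2)
  have hmF4 : Measurable (F4' B φ) := by
    unfold F4'
    refine (measurable_const.div ((continuous_norm.pow 2).measurable)).mul ?_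
    exact (((Complex.measurable_ofReal.comp hΦnc.measurable).mul hφcont.measurable).sub
      ((((Complex.measurable_ofReal.comp (hprojc 0).measurable).mul (hpdc 1).measurable).sub
        ((Complex.measurable_ofReal.comp (hprojc 1).measurable).mul
          (hpdc 0).measurable)).const_mul (-Complex.I))).norm.pow_const 2
  -- majorant
  set M : E2 → ℝ := fun x => 2*‖partialDeriv' 0 φ x‖^2 + 2*‖partialDeriv' 1 φ x‖^2
      + 4*C^2*‖φ x‖^2 with hMdef
  have hMc : Continuous M :=
    ((continuous_const.mul ((hpdc 0).norm.pow 2)).add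
      (continuous_const.mul ((hpdc 1).norm.pow 2))).add
      (continuous_const.mul (hφcont.norm.pow 2))
  have hMsupp : HasCompactSupport M := by
    apply HasCompactSupport.intro hsupp
    intro x hx
    have hφ0 : φ x = 0 := image_eq_zero_of_notMem_tsupport hx
    have hd0 : fderiv ℝ φ x = 0 := by
      by_contra h
      exact hx (support_fderiv_subset ℝ (Function.mem_support.2 h))
    rw [hMdef]
    simp [partialDeriv', hd0, hφ0]
  have hM_int : Integrable M := hMc.integrable_of_hasCompactSupport hMsupp
  have hbound : ∀ x : E2, F1' B φ x + F2' B φ x ≤ M x := by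
    intro x
    rcases eq_or_ne x 0 with rfl | hx0
    · rw [hMdef]
      unfold F1' F2'
      simp only [PiLp.zero_apply, neg_zero, mul_zero, zero_mul, Complex.ofReal_zero, sub_zero,
        norm_mul, norm_neg, Complex.norm_I, one_mul, norm_zero]
      nlinarith [sq_nonneg (C*‖φ (0:E2)‖), sq_nonneg ‖partialDeriv' 0 φ (0:E2)‖,
        sq_nonneg ‖partialDeriv' 1 φ (0:E2)‖]
    rcases lt_or_ge ‖x‖ R with hxR | hxR
    · have hxpos : 0 < ‖x‖ := norm_pos_iff.2 hx0
      have hΦx := hΦb ‖x‖ hxpos hxR.le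
      have hcoef : ∀ g : ℝ, |g| ≤ ‖x‖ →
          |(∫ s in Ioo (0:ℝ) ‖x‖, B s * s) / ‖x‖ ^ 2 * g| ≤ C := by
        intro g hg
        rw [abs_mul, abs_div, abs_of_nonneg (by positivity : (0:ℝ) ≤ ‖x‖^2),
          div_mul_eq_mul_div, div_le_iff₀ (by positivity)]
        calc |∫ s in Ioo (0:ℝ) ‖x‖, B s * s| * |g| ≤ (‖x‖*C) * ‖x‖ :=
              mul_le_mul hΦx hg (abs_nonneg g) (by positivity)
          _ = C * ‖x‖^2 := by ring
      have h1 : F1' B φ x ≤ (‖partialDeriv' 0 φ x‖ + C*‖φ x‖)^2 := by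
        unfold F1'
        refine pow_le_pow_left₀ (norm_nonneg _) ((norm_sub_le _ _).trans (add_le_add ?_ ?_)) 2
        · rw [norm_mul, norm_neg, Complex.norm_I, one_mul]
        · rw [norm_mul, Complex.norm_real, Real.norm_eq_abs]
          refine mul_le_mul_of_nonneg_right (hcoef _ ?_) (norm_nonneg _)
          rw [abs_neg]
          exact (habscoord x).2
      have h2 : F2' B φ x ≤ (‖partialDeriv' 1 φ x‖ + C*‖φ x‖)^2 := by
        unfold F2'
        refine pow_le_pow_left₀ (norm_nonneg _) ((norm_sub_le _ _).trans (add_le_add ?_ ?_)) 2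
        · rw [norm_mul, norm_neg, Complex.norm_I, one_mul]
        · rw [norm_mul, Complex.norm_real, Real.norm_eq_abs]
          exact mul_le_mul_of_nonneg_right (hcoef _ (habscoord x).1) (norm_nonneg _)
      rw [hMdef]
      dsimp only
      nlinarith [sq_nonneg (‖partialDeriv' 0 φ x‖ - C*‖φ x‖),
        sq_nonneg (‖partialDeriv' 1 φ x‖ - C*‖φ x‖)]
    · obtain ⟨hφ0, hd0⟩ := hout x hxR
      have hu0 : partialDeriv' 0 φ x = 0 := by unfold partialDeriv'; rw [hd0]; simp
      have hv0 : partialDeriv' 1 φ x = 0 := by unfold partialDeriv'; rw [hd0]; simp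
      rw [hMdef]
      unfold F1' F2'
      rw [hφ0, hu0, hv0]
      simp
      positivity
  have hab_int : Integrable (fun x => F1' B φ x + F2' B φ x) := by
    refine Integrable.mono' hM_int (hmF1.add hmF2).aestronglyMeasurable
      (Filter.Eventually.of_forall fun x => ?_)
    rw [Real.norm_eq_abs, abs_of_nonneg (by unfold F1' F2'; positivity)]
    exact hbound x
  have hF3nn : ∀ x, 0 ≤ F3' φ x := fun x => by unfold F3'; positivity
  have hF4nn : ∀ x, 0 ≤ F4' B φ x := fun x => by unfold F4'; positivity
  have hF3_int : Integrable (F3' φ) := by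
    refine Integrable.mono' hab_int hmF3.aestronglyMeasurable ?_
    filter_upwards [hae0] with x hx
    rw [Real.norm_eq_abs, abs_of_nonneg (hF3nn x)]
    have h := hkey x hx
    linarith [hF4nn x, hF3nn x]
  have hF4_int : Integrable (F4' B φ) := by
    refine Integrable.mono' hab_int hmF4.aestronglyMeasurable ?_
    filter_upwards [hae0] with x hx
    rw [Real.norm_eq_abs, abs_of_nonneg (hF4nn x)]
    have h := hkey x hx
    linarith [hF3nn x, hF4nn x]
  calc (∫ x : E2, F1' B φ x + F2' B φ x) = ∫ x : E2, (F3' φ x + F4' B φ x) :=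
        integral_congr_ae (by filter_upwards [hae0] with x hx using hkey x hx)
    _ = (∫ x : E2, F3' φ x) + ∫ x : E2, F4' B φ x := integral_add hF3_int hF4_int
end

section
/- Let a > 0, 0 < ζ ≤ 1, let b : (0,∞) → [0,∞) be measurable, and let w : (0,∞) × ℤ → ℂ satisfy |w(r,m)| ≤ b(r) e^{−a|m|^ζ} for a.e. r > 0 and all m ∈ ℤ. Let (F_j)_{j∈ℤ} be real-valued functions on (0,∞) with sup_{r>0} |F_j(r) − F_k(r)| ≤ (a/2)|j−k|^ζ for all j,k ∈ ℤ. Let (φ_j)_{j∈ℤ} be measurable functions (0,∞) → ℂ with Σ_{j∈ℤ} ∫₀^∞ b(r) |φ_j(r)|² r dr < ∞. Then Σ_{j∈ℤ} Σ_{k∈ℤ} |∫₀^∞ e^{F_j(r) − F_k(r)} \overline{φ_j(r)} w(r, j−k) φ_k(r) r dr| ≤ ξ(a,ζ) · Σ_{j∈ℤ} ∫₀^∞ b(r) |φ_j(r)|² r dr, where ξ(a,ζ) = Σ_{m∈ℤ} e^{−(a/2)|m|^ζ}. -/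
/-! Pointwise in `r`, the admissibility of `F` and the decay of `w` give
`‖e^{F_j - F_k} φ̄_j w(·, j - k) φ_k‖ ≤ g(j - k) b ‖φ_j‖ ‖φ_k‖` with
`g(m) = e^{-(a/2)|m|^ζ}`, and `‖φ_j‖ ‖φ_k‖ ≤ (‖φ_j‖² + ‖φ_k‖²) / 2`. Hence the `(j, k)` term is at
most `g(j - k) (I_j + I_k) / 2`, where `I_j = ∫ b ‖φ_j‖² r dr`, and summing this convolution kernel
over `ℤ²` (Schur's test) gives `(Σ g) (Σ I)`. -/

open MeasureTheory Set Filter Asymptotics Real ComplexConjugate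

theorem isLittleO_exp_neg_mul_rpow_rpow_atTop {c ζ : ℝ} (hc : 0 < c) (hζ : 0 < ζ) (s : ℝ) :
    (fun x : ℝ => exp (-c * x ^ ζ)) =o[atTop] fun x => x ^ s := by
  refine ((isLittleO_exp_neg_mul_rpow_atTop hc (s / ζ)).comp_tendsto
    (tendsto_rpow_atTop hζ)).congr' .rfl ?_
  filter_upwards [eventually_ge_atTop 0] with x hx
  rw [Function.comp_apply, ← rpow_mul hx, mul_div_cancel₀ _ hζ.ne']

theorem summable_exp_neg_mul_abs_rpow {c ζ : ℝ} (hc : 0 < c) (hζ : 0 < ζ) :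
    Summable fun m : ℤ => exp (-c * |(m : ℝ)| ^ ζ) := by
  have habs : Tendsto (fun m : ℤ => |(m : ℝ)|) cofinite atTop :=
    tendsto_norm_cocompact_atTop.comp Int.tendsto_coe_cofinite
  exact summable_of_isBigO (summable_abs_int_rpow one_lt_two)
    ((isLittleO_exp_neg_mul_rpow_rpow_atTop hc hζ (-2)).comp_tendsto habs).isBigO

theorem tsum_tsum_le_of_le_mul_sub {G : Type*} [AddGroup G] {T : G → G → ℝ} {g x : G → ℝ}
    (hT0 : ∀ j k, 0 ≤ T j k) (hT : ∀ j k, T j k ≤ g (j - k) * ((x j + x k) / 2))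
    (hg : Summable g) (hx : Summable x) (hg0 : 0 ≤ g) (hx0 : 0 ≤ x) :
    ∑' j, ∑' k, T j k ≤ (∑' m, g m) * ∑' j, x j := by
  have hprod : HasSum (fun p : G × G => x p.1 * g p.2) ((∑' j, x j) * ∑' m, g m) :=
    hx.hasSum.mul hg.hasSum (hx.mul_of_nonneg hg hx0 hg0)
  have hrow : HasSum (fun p : G × G => x p.1 * g (p.1 - p.2)) ((∑' j, x j) * ∑' m, g m) :=
    (Equiv.prodShear (Equiv.refl G) Equiv.subLeft).hasSum_iff.mpr hprod
  have hcol : HasSum (fun p : G × G => x p.2 * g (p.1 - p.2)) ((∑' j, x j) * ∑' m, g m) :=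
    ((Equiv.prodComm G G).trans
      (Equiv.prodShear (Equiv.refl G) Equiv.subRight)).hasSum_iff.mpr hprod
  have hK : HasSum (fun p : G × G => g (p.1 - p.2) * ((x p.1 + x p.2) / 2))
      ((∑' m, g m) * ∑' j, x j) := by
    rw [mul_comm, ← add_halves ((∑' j, x j) * ∑' m, g m), ← add_div]
    exact ((hrow.add hcol).div_const 2).congr_fun fun p => by ring
  have hTs : Summable fun p : G × G => T p.1 p.2 :=
    Summable.of_nonneg_of_le (fun _ => hT0 _ _) (fun _ => hT _ _) hK.summable
  calc ∑' j, ∑' k, T j k = ∑' p : G × G, T p.1 p.2 := hTs.tsum_prod.symm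
    _ ≤ (∑' m, g m) * ∑' j, x j := hasSum_le (fun _ => hT _ _) hTs.hasSum hK

theorem norm_exp_mul_conj_mul_mul_mul_le {a M β ρ δ : ℝ} {u v ω : ℂ} (hδ : δ ≤ a / 2 * M)
    (hω : ‖ω‖ ≤ β * exp (-a * M)) (hβ : 0 ≤ β) (hρ : 0 ≤ ρ) :
    ‖(exp δ : ℂ) * conj u * ω * v * ρ‖ ≤
      exp (-(a / 2) * M) * ((β * ‖u‖ ^ 2 * ρ + β * ‖v‖ ^ 2 * ρ) / 2) := by
  have hweight : exp δ * exp (-a * M) ≤ exp (-(a / 2) * M) := by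
    rw [← exp_add]
    exact exp_le_exp.mpr (by linarith)
  have hamgm : β * (‖u‖ * ‖v‖) * ρ ≤ (β * ‖u‖ ^ 2 * ρ + β * ‖v‖ ^ 2 * ρ) / 2 := by
    nlinarith [mul_nonneg (mul_nonneg hβ hρ) (sq_nonneg (‖u‖ - ‖v‖))]
  calc ‖(exp δ : ℂ) * conj u * ω * v * ρ‖ = exp δ * ‖u‖ * ‖ω‖ * ‖v‖ * ρ := by
        simp [abs_of_nonneg hρ]
    _ ≤ exp δ * ‖u‖ * (β * exp (-a * M)) * ‖v‖ * ρ := by gcongr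
    _ = (exp δ * exp (-a * M)) * (β * (‖u‖ * ‖v‖) * ρ) := by ring
    _ ≤ exp (-(a / 2) * M) * ((β * ‖u‖ ^ 2 * ρ + β * ‖v‖ ^ 2 * ρ) / 2) := by gcongr

theorem norm_integral_exp_mul_conj_mul_mul_mul_le {α : Type*} [MeasurableSpace α] {μ : Measure α}
    {a M : ℝ} {b d ρ : α → ℝ} {u v ω : α → ℂ}
    (hd : ∀ᵐ r ∂μ, d r ≤ a / 2 * M) (hω : ∀ᵐ r ∂μ, ‖ω r‖ ≤ b r * exp (-a * M))
    (hb : ∀ᵐ r ∂μ, 0 ≤ b r) (hρ : ∀ᵐ r ∂μ, 0 ≤ ρ r)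
    (hu : Integrable (fun r => b r * ‖u r‖ ^ 2 * ρ r) μ)
    (hv : Integrable (fun r => b r * ‖v r‖ ^ 2 * ρ r) μ) :
    ‖∫ r, (exp (d r) : ℂ) * conj (u r) * ω r * v r * ρ r ∂μ‖ ≤
      exp (-(a / 2) * M) *
        (((∫ r, b r * ‖u r‖ ^ 2 * ρ r ∂μ) + ∫ r, b r * ‖v r‖ ^ 2 * ρ r ∂μ) / 2) := by
  have hbound : Integrable (fun r => exp (-(a / 2) * M) *
      ((b r * ‖u r‖ ^ 2 * ρ r + b r * ‖v r‖ ^ 2 * ρ r) / 2)) μ :=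
    ((hu.add hv).div_const 2).const_mul _
  refine (norm_integral_le_of_norm_le hbound ?_).trans_eq ?_
  · filter_upwards [hd, hω, hb, hρ] with r hdr hωr hbr hρr
    exact norm_exp_mul_conj_mul_mul_mul_le hdr hωr hbr hρr
  · rw [integral_const_mul, integral_div, integral_add hu hv]

theorem twisted_perturbation_mode_bound_general (a ζ : ℝ) (ha : 0 < a) (hζ0 : 0 < ζ)
    (b : ℝ → ℝ) (hbnn : ∀ r, 0 ≤ b r)
    (w : ℝ → ℤ → ℂ)
    (hw : ∀ m : ℤ, ∀ᵐ r ∂(volume.restrict (Set.Ioi (0 : ℝ))),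
      ‖w r m‖ ≤ b r * Real.exp (-a * |(m : ℝ)| ^ ζ))
    (F : ℤ → ℝ → ℝ)
    (hF : ∀ j k : ℤ, ∀ r > (0 : ℝ), |F j r - F k r| ≤ (a / 2) * |((j - k : ℤ) : ℝ)| ^ ζ)
    (φ : ℤ → ℝ → ℂ)
    (hφint : ∀ j : ℤ, IntegrableOn (fun r => b r * ‖φ j r‖ ^ 2 * r) (Set.Ioi 0))
    (hφsum : Summable (fun j : ℤ => ∫ r in Set.Ioi (0 : ℝ), b r * ‖φ j r‖ ^ 2 * r)) :
    (∑' j : ℤ, ∑' k : ℤ, ‖∫ r in Set.Ioi (0 : ℝ),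
        (Real.exp (F j r - F k r) : ℂ) * (starRingEnd ℂ) (φ j r) * w r (j - k)
          * φ k r * (r : ℂ)‖)
      ≤ (∑' m : ℤ, Real.exp (-(a / 2) * |(m : ℝ)| ^ ζ)) *
          ∑' j : ℤ, ∫ r in Set.Ioi (0 : ℝ), b r * ‖φ j r‖ ^ 2 * r := by
  have hpos : ∀ᵐ r ∂(volume.restrict (Ioi (0 : ℝ))), 0 < r := ae_restrict_mem measurableSet_Ioi
  refine tsum_tsum_le_of_le_mul_sub (fun j k => norm_nonneg _) (fun j k => ?_)
    (summable_exp_neg_mul_abs_rpow (half_pos ha) hζ0) hφsum (fun m => (exp_pos _).le)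
    (fun j => setIntegral_nonneg measurableSet_Ioi fun r hr =>
      mul_nonneg (mul_nonneg (hbnn r) (sq_nonneg _)) (le_of_lt hr))
  refine norm_integral_exp_mul_conj_mul_mul_mul_le ?_ (hw (j - k)) (ae_of_all _ hbnn)
    (hpos.mono fun r hr => hr.le) (hφint j) (hφint k)
  filter_upwards [hpos] with r hr
  exact (le_abs_self _).trans (hF j k r hr)

/-- Twisted Schur-type bound in angular Fourier modes: if `|w(r,m)| ≤ b(r) e^{−a|m|^ζ}`
for a.e. `r > 0` and all `m`, the weight family satisfies
`sup_{r>0} |F_j(r) − F_k(r)| ≤ (a/2)|j−k|^ζ`, and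
`Σ_j ∫₀^∞ b(r)|φ_j(r)|² r dr < ∞`, then
`Σ_{j,k} |∫₀^∞ e^{F_j−F_k} \overline{φ_j} w(·, j−k) φ_k r dr| ≤ ξ(a,ζ) Σ_j ∫ b |φ_j|² r dr`,
with `ξ(a,ζ) = Σ_{m∈ℤ} e^{−(a/2)|m|^ζ}`. -/
theorem twisted_perturbation_mode_bound (a ζ : ℝ) (ha : 0 < a) (hζ0 : 0 < ζ) (hζ1 : ζ ≤ 1)
    (b : ℝ → ℝ) (hb : Measurable b) (hbnn : ∀ r, 0 ≤ b r)
    (w : ℝ → ℤ → ℂ) (hwmeas : ∀ m : ℤ, Measurable (fun r => w r m))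
    (hw : ∀ m : ℤ, ∀ᵐ r ∂(volume.restrict (Set.Ioi (0 : ℝ))),
      ‖w r m‖ ≤ b r * Real.exp (-a * |(m : ℝ)| ^ ζ))
    (F : ℤ → ℝ → ℝ)
    (hF : ∀ j k : ℤ, ∀ r > (0 : ℝ), |F j r - F k r| ≤ (a / 2) * |((j - k : ℤ) : ℝ)| ^ ζ)
    (φ : ℤ → ℝ → ℂ) (hφmeas : ∀ j : ℤ, Measurable (φ j))
    (hφint : ∀ j : ℤ, IntegrableOn (fun r => b r * ‖φ j r‖ ^ 2 * r) (Set.Ioi 0))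
    (hφsum : Summable (fun j : ℤ => ∫ r in Set.Ioi (0 : ℝ), b r * ‖φ j r‖ ^ 2 * r)) :
    (∑' j : ℤ, ∑' k : ℤ, ‖∫ r in Set.Ioi (0 : ℝ),
        (Real.exp (F j r - F k r) : ℂ) * (starRingEnd ℂ) (φ j r) * w r (j - k)
          * φ k r * (r : ℂ)‖)
      ≤ (∑' m : ℤ, Real.exp (-(a / 2) * |(m : ℝ)| ^ ζ)) *
          ∑' j : ℤ, ∫ r in Set.Ioi (0 : ℝ), b r * ‖φ j r‖ ^ 2 * r :=
  twisted_perturbation_mode_bound_general a ζ ha hζ0 b hbnn w hw F hF φ hφint hφsum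
end
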